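/- arXiv:2310.19965 — 7 statements merged into one kernel-verified Lean document; each statement's English description precedes it below -/
import Mathlib

section
/- If V ⊆ A^n is a d-code (in particular, any finite set of words of length n in which every two distinct words are dichotomous and every word has exactly d non-star positions), then |V| ≤ 2^d. -/
/-- The alphabet `A = {0,1,*}`: `some false` is the letter 0, `some true` is
the letter 1, and `none` is the star `*`. -/
abbrev Letter := Option Bool

/-- A word of length `n` over the alphabet `A = {0,1,*}`. -/
abbrev Word (n : ℕ) := Fin n → Letter

/-- `u` and `v` are dichotomous at position `i`: the letters `u i` and `v i`
are the two distinct Boolean letters. -/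
def DichotAt {n : ℕ} (u v : Word n) (i : Fin n) : Prop :=
  ∃ b : Bool, u i = some b ∧ v i = some !b

/-- Two words are dichotomous if they are dichotomous at some position. -/
def Dichotomous {n : ℕ} (u v : Word n) : Prop :=
  ∃ i : Fin n, DichotAt u v i

/-- Two words are neighborly if they are dichotomous at exactly one position. -/
def NeighborlyWords {n : ℕ} (u v : Word n) : Prop :=
  ∃! i : Fin n, DichotAt u v i

/-- A code: every two distinct words are dichotomous. -/
def IsCode {n : ℕ} (V : Finset (Word n)) : Prop :=
  ∀ u ∈ V, ∀ v ∈ V, u ≠ v → Dichotomous u v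

/-- A neighborly code: every two distinct words are neighborly. -/
def IsNeighborlyCode {n : ℕ} (V : Finset (Word n)) : Prop :=
  ∀ u ∈ V, ∀ v ∈ V, u ≠ v → NeighborlyWords u v

/-- A twin pair: two words which are dichotomous at some position and agree
at every other position (hence they are neighborly). -/
def IsTwinPair {n : ℕ} (u v : Word n) : Prop :=
  ∃ i : Fin n, DichotAt u v i ∧ ∀ j : Fin n, j ≠ i → u j = v j

/-- `prop v` is the set of non-star positions of `v`. -/
def propSet {n : ℕ} (v : Word n) : Finset (Fin n) :=
  Finset.univ.filter (fun i => v i ≠ none)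

/-! A word `v` with `d` non-star positions determines the cylinder of the `2 ^ (n - d)` Boolean words
agreeing with `v` off its stars, and dichotomous words have disjoint cylinders. Hence the
cylinders of a `d`-code are `|V|` disjoint subsets of `{0,1}^n`, so `|V| * 2 ^ (n - d) ≤ 2 ^ n`. -/

open Finset

def cylinder {n : ℕ} (v : Word n) : Finset (Fin n → Bool) :=
  univ.filter fun x => ∀ i, v i ≠ none → v i = some (x i)

lemma disjoint_cylinder_of_dichotomous {n : ℕ} {u v : Word n} (h : Dichotomous u v) :
    Disjoint (cylinder u) (cylinder v) := by
  obtain ⟨i, b, hu, hv⟩ := h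
  refine disjoint_left.2 fun x hxu hxv => ?_
  have hxu' := (mem_filter.1 hxu).2 i (by simp [hu])
  have hxv' := (mem_filter.1 hxv).2 i (by simp [hv])
  rw [hu, Option.some_inj] at hxu'
  rw [hv, Option.some_inj, ← hxu'] at hxv'
  exact Bool.not_ne_self b hxv'

lemma card_stars_eq_sub_card_propSet {n : ℕ} (v : Word n) :
    Fintype.card {i // v i = none} = n - #(propSet v) := by
  have h := card_filter_add_card_filter_not (s := univ) fun i : Fin n => v i ≠ none
  simp only [not_not, card_univ, Fintype.card_fin] at h
  rw [Fintype.card_subtype, propSet]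
  omega

lemma card_cylinder {n : ℕ} (v : Word n) : #(cylinder v) = 2 ^ (n - #(propSet v)) := by
  rw [← card_stars_eq_sub_card_propSet, ← Fintype.card_bool, ← Fintype.card_fun, ← card_univ]
  refine card_nbij' (fun x i => x i)
    (fun y i => if h : v i = none then y ⟨i, h⟩ else (v i).getD false)
    (fun _ _ => mem_coe.2 (mem_univ _)) ?_ ?_ (fun y _ => by funext ⟨i, hi⟩; simp [hi])
  · intro y _
    simp only [coe_filter, cylinder, Set.mem_ofPred_eq, mem_univ, true_and]
    intro i hi
    obtain ⟨b, hb⟩ := Option.ne_none_iff_exists'.1 hi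
    simp [hb]
  · intro x hx
    funext i
    have := (mem_filter.1 hx).2 i
    cases hvi : v i <;> simp_all

theorem IsCode.sum_two_pow_le {n : ℕ} {V : Finset (Word n)} (hV : IsCode V) :
    ∑ v ∈ V, 2 ^ (n - #(propSet v)) ≤ 2 ^ n := by
  have hdisj : (V : Set (Word n)).PairwiseDisjoint cylinder := fun u hu v hv huv =>
    disjoint_cylinder_of_dichotomous (hV u hu v hv huv)
  calc ∑ v ∈ V, 2 ^ (n - #(propSet v)) = #(V.biUnion cylinder) := by
        simp only [card_biUnion hdisj, card_cylinder]
    _ ≤ Fintype.card (Fin n → Bool) := card_le_univ _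
    _ = 2 ^ n := by simp

/-- Every `d`-code has at most `2^d` elements. -/
theorem dCode_card_le {n d : ℕ} (V : Finset (Word n))
    (hcode : IsCode V) (hd : ∀ v ∈ V, (propSet v).card = d) :
    V.card ≤ 2 ^ d := by
  obtain rfl | ⟨v₀, hv₀⟩ := V.eq_empty_or_nonempty
  · simp
  have hdn : d ≤ n := hd v₀ hv₀ ▸ (card_le_univ _).trans_eq (Fintype.card_fin n)
  have hkraft : #V * 2 ^ (n - d) ≤ 2 ^ d * 2 ^ (n - d) := by
    rw [← pow_add, Nat.add_sub_cancel' hdn, ← smul_eq_mul, ← sum_const]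
    exact (sum_congr rfl fun v hv => by rw [hd v hv]).trans_le hcode.sum_two_pow_le
  exact Nat.le_of_mul_le_mul_right hkraft (by positivity)
end

section
/- Let V ⊆ A^n be a neighborly code and j a position. If u, w ∈ V satisfy u j = w j = 0 and u k, w k are the two distinct Boolean letters at some position k ≠ j, then every v ∈ V with v j = 1 satisfies v k = *. Symmetrically, if u, w ∈ V satisfy u j = w j = 1 and are dichotomous at some position k ≠ j, then every v ∈ V with v j = 0 satisfies v k = *. -/

lemma star_aux {n : ℕ} (V : Finset (Word n)) (hV : IsNeighborlyCode V) (j : Fin n)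
    (a : Bool) :
    ∀ u ∈ V, ∀ w ∈ V, u j = some a → w j = some a →
      ∀ k : Fin n, k ≠ j → DichotAt u w k →
        ∀ v ∈ V, v j = some !a → v k = none := by
  intro u hu w hw huj hwj k hkj hd v hv hvj
  obtain ⟨b, hub, hwb⟩ := hd
  cases hvk : v k with
  | none => rfl
  | some c =>
    exfalso
    by_cases hc : c = !b
    · -- v dichotomous with u at both j and k
      have hne : v ≠ u := by
        intro h; rw [h, huj] at hvj; simp at hvj
      obtain ⟨i, _, huniq⟩ := hV v hv u hu hne
      have h1 : j = i := huniq j ⟨!a, hvj, by simp [huj]⟩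
      have h2 : k = i := huniq k ⟨!b, by rw [hvk, hc], by simp [hub]⟩
      exact hkj (h2.trans h1.symm)
    · have hc' : c = b := by cases c <;> cases b <;> simp_all
      have hne : v ≠ w := by
        intro h; rw [h, hwj] at hvj; simp at hvj
      obtain ⟨i, _, huniq⟩ := hV v hv w hw hne
      have h1 : j = i := huniq j ⟨!a, hvj, by simp [hwj]⟩
      have h2 : k = i := huniq k ⟨b, by rw [hvk, hc'], hwb⟩
      exact hkj (h2.trans h1.symm)

/-- Structure lemma for neighborly codes: if two words of `V` with letter `0`
(resp. `1`) at position `j` are dichotomous at a position `k ≠ j`, then every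
word of `V` with letter `1` (resp. `0`) at position `j` has `*` at `k`. -/
theorem neighborly_code_star_structure {n : ℕ} (V : Finset (Word n))
    (hV : IsNeighborlyCode V) (j : Fin n) :
    (∀ u ∈ V, ∀ w ∈ V, u j = some false → w j = some false →
      ∀ k : Fin n, k ≠ j → DichotAt u w k →
        ∀ v ∈ V, v j = some true → v k = none) ∧
    (∀ u ∈ V, ∀ w ∈ V, u j = some true → w j = some true →
      ∀ k : Fin n, k ≠ j → DichotAt u w k →
        ∀ v ∈ V, v j = some false → v k = none) := by
  refine ⟨fun u hu w hw huj hwj => star_aux V hV j false u hu w hw huj hwj,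
    fun u hu w hw huj hwj k hk hd v hv hvj =>
      star_aux V hV j true u hu w hw huj hwj k hk hd v hv (by simp [hvj])⟩
end

section
/- Let V ⊆ A^n be a neighborly code, j a position, and define C^j_0 = {k ≠ j : there exist v, u ∈ V with v j = u j = 0 and v k, u k the two distinct Boolean letters} and C^j_1 = {k ≠ j : there exist v, u ∈ V with v j = u j = 1 and v k, u k the two distinct Boolean letters}. Then C^j_0 ∩ C^j_1 = ∅. -/
/-- For a neighborly code, the sets `C^j_0` and `C^j_1` are disjoint. -/
theorem neighborly_code_C0_C1_disjoint {n : ℕ} (V : Finset (Word n))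
    (hV : IsNeighborlyCode V) (j : Fin n) :
    {k : Fin n | k ≠ j ∧ ∃ v ∈ V, ∃ u ∈ V,
      v j = some false ∧ u j = some false ∧ DichotAt v u k} ∩
    {k : Fin n | k ≠ j ∧ ∃ v ∈ V, ∃ u ∈ V,
      v j = some true ∧ u j = some true ∧ DichotAt v u k} = ∅ := by
  ext k
  simp only [Set.mem_inter_iff, Set.mem_setOf_eq, Set.mem_empty_iff_false, iff_false]
  rintro ⟨⟨hkj, v, hv, u, hu, hvj, huj, b, hvk, huk⟩,
    -, v', hv', u', hu', hvj', huj', c, hvk', huk'⟩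
  obtain ⟨w, hwV, hwj, hwk⟩ : ∃ w ∈ V, w j = some true ∧ w k = some !b := by
    by_cases h : c = !b
    · exact ⟨v', hv', hvj', h ▸ hvk'⟩
    · refine ⟨u', hu', huj', ?_⟩
      rw [huk']
      congr 1
      cases b <;> cases c <;> simp_all
  have hne : v ≠ w := fun h => by rw [h, hwj] at hvj; cases hvj
  obtain ⟨i, _, huniq⟩ := hV v hv w hwV hne
  have h1 : j = i := huniq j ⟨false, hvj, by simpa using hwj⟩
  have h2 : k = i := huniq k ⟨b, hvk, hwk⟩
  exact hkj (h2.trans h1.symm)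
end

section
/- If V ⊆ A^n is a neighborly code and v ∈ V, then the sets V^{j, (v j)'} for j ∈ prop(v) are pairwise disjoint, and |V| − 1 = Σ_{j ∈ prop(v)} |V^{j, (v j)'}|. -/
/-- If `V` is a neighborly code and `v ∈ V`, the sets `V^{j,(v j)'}` for
`j ∈ prop(v)` are pairwise disjoint, and `|V| - 1` is the sum of their
cardinalities. -/
theorem neighborly_code_partition {n : ℕ} (V : Finset (Word n))
    (hV : IsNeighborlyCode V) (v : Word n) (hv : v ∈ V) :
    (∀ i ∈ propSet v, ∀ j ∈ propSet v, i ≠ j →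
      Disjoint (V.filter (fun u => u i = Option.map (fun b => !b) (v i)))
        (V.filter (fun u => u j = Option.map (fun b => !b) (v j)))) ∧
    V.card - 1 = ∑ j ∈ propSet v,
      (V.filter (fun u => u j = Option.map (fun b => !b) (v j))).card := by
  -- basic fact: membership in a filter at i ∈ propSet gives DichotAt u v i
  have key : ∀ i ∈ propSet v, ∀ u ∈ V,
      u i = Option.map (fun b => !b) (v i) → DichotAt u v i ∧ u ≠ v := by
    intro i hi u _ hu
    simp only [propSet, Finset.mem_filter] at hi
    obtain ⟨c, hc⟩ := Option.ne_none_iff_exists'.mp hi.2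
    rw [hc] at hu
    refine ⟨⟨!c, by simpa using hu, by simp [hc]⟩, ?_⟩
    intro h
    rw [h, hc] at hu
    simp at hu
  have hdisj : ∀ i ∈ propSet v, ∀ j ∈ propSet v, i ≠ j →
      Disjoint (V.filter (fun u => u i = Option.map (fun b => !b) (v i)))
        (V.filter (fun u => u j = Option.map (fun b => !b) (v j))) := by
    intro i hi j hj hij
    rw [Finset.disjoint_left]
    intro u hu1 hu2
    simp only [Finset.mem_filter] at hu1 hu2
    obtain ⟨hdi, hne⟩ := key i hi u hu1.1 hu1.2
    obtain ⟨hdj, _⟩ := key j hj u hu2.1 hu2.2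
    obtain ⟨k, _, hk⟩ := hV u hu1.1 v hv hne
    exact hij ((hk i hdi).trans (hk j hdj).symm)
  refine ⟨hdisj, ?_⟩
  have hU : V.erase v = (propSet v).biUnion
      (fun j => V.filter (fun u => u j = Option.map (fun b => !b) (v j))) := by
    ext u
    simp only [Finset.mem_erase, Finset.mem_biUnion, Finset.mem_filter]
    constructor
    · rintro ⟨hne, hu⟩
      obtain ⟨i, ⟨b, hub, hvb⟩, _⟩ := hV u hu v hv hne
      refine ⟨i, ?_, hu, ?_⟩
      · simp [propSet, hvb]
      · rw [hvb, hub]; simp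
    · rintro ⟨j, hj, hu, huj⟩
      exact ⟨(key j hj u hu huj).2, hu⟩
  have := Finset.card_biUnion (s := propSet v)
    (t := fun j => V.filter (fun u => u j = Option.map (fun b => !b) (v j)))
    (fun i hi j hj hij => hdisj i hi j hj hij)
  rw [← this, ← hU, Finset.card_erase_of_mem hv]
end

section
/- If V ⊆ A^n is a neighborly d-code (d ≥ 1) and v ∈ V, then there exists i ∈ prop(v) such that d · |V^{i,(v i)'}| ≥ |V| − 1. -/
/-- In a neighborly `d`-code `V`, for every `v ∈ V` there is a position
`i ∈ prop(v)` with `d * |V^{i,(v i)'}| ≥ |V| - 1`. -/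
theorem neighborly_code_large_section {n d : ℕ} (hd : 1 ≤ d)
    (V : Finset (Word n)) (hV : IsNeighborlyCode V)
    (hdc : ∀ v ∈ V, (propSet v).card = d) (v : Word n) (hv : v ∈ V) :
    ∃ i ∈ propSet v,
      V.card - 1 ≤ d * (V.filter (fun u => u i = Option.map (fun b => !b) (v i))).card := by
  set g : Fin n → ℕ := fun i =>
    (V.filter (fun u => u i = Option.map (fun b => !b) (v i))).card with hg
  have hsne : (propSet v).Nonempty := by
    rw [← Finset.card_pos, hdc v hv]; exact hd
  obtain ⟨i₀, hi₀, hmax⟩ := Finset.exists_max_image (propSet v) g hsne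
  refine ⟨i₀, hi₀, ?_⟩
  have hsub : V.erase v ⊆ (propSet v).biUnion
      (fun i => V.filter (fun u => u i = Option.map (fun b => !b) (v i))) := by
    intro u hu
    obtain ⟨huv, huV⟩ := Finset.mem_erase.mp hu
    obtain ⟨i, ⟨b, hvb, hub⟩, -⟩ := hV v hv u huV (Ne.symm huv)
    refine Finset.mem_biUnion.mpr ⟨i, ?_, ?_⟩
    · simp [propSet, hvb]
    · simp [Finset.mem_filter, huV, hvb, hub]
  calc V.card - 1 = (V.erase v).card := (Finset.card_erase_of_mem hv).symm
    _ ≤ _ := Finset.card_le_card hsub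
    _ ≤ ∑ i ∈ propSet v, g i := Finset.card_biUnion_le
    _ ≤ (propSet v).card * g i₀ := Finset.sum_le_card_nsmul _ _ _ (fun i hi => hmax i hi)
    _ = d * g i₀ := by rw [hdc v hv]
end

section
/- Let V ⊆ A^n be a code, i a position, and δ ∈ {0,1} be such that vol(V^{i,δ}) ≥ vol(V^{i,δ'}), where δ' is the opposite Boolean letter. Then the inflation of V at position i satisfies vol(V^{i,δ,*} ∪ V^{i,*}) ≥ vol(V), where V^{i,δ,*} is obtained from V^{i,δ} by replacing the i-th letter of each word with *. -/
/-- The volume of a finite set of words: `vol(W) = Σ_{w ∈ W} 2^(n - |prop w|)`. -/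
def codeVol {n : ℕ} (W : Finset (Word n)) : ℕ :=
  ∑ w ∈ W, 2 ^ (n - (propSet w).card)


lemma propSet_update_none {n : ℕ} (v : Word n) (i : Fin n) :
    propSet (Function.update v i none) = (propSet v).erase i := by
  ext j
  simp only [propSet, Finset.mem_filter, Finset.mem_univ, true_and, Finset.mem_erase]
  by_cases hj : j = i
  · subst hj; simp
  · simp [Function.update_of_ne hj, hj]

/-- Inflation does not decrease volume: if `vol(V^{i,δ}) ≥ vol(V^{i,δ'})`, then
`vol(V^{i,δ,*} ∪ V^{i,*}) ≥ vol(V)`. -/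
theorem inflation_vol_ge {n : ℕ} (V : Finset (Word n)) (hcode : IsCode V)
    (i : Fin n) (δ : Bool)
    (hδ : codeVol (V.filter (fun v => v i = some !δ)) ≤
          codeVol (V.filter (fun v => v i = some δ))) :
    codeVol V ≤
      codeVol ((V.filter (fun v => v i = some δ)).image
          (fun v => Function.update v i none) ∪
        V.filter (fun v => v i = none)) := by
  classical
  set f : Word n → Word n := fun v => Function.update v i none with hf
  set Vd := V.filter (fun v => v i = some δ) with hVd
  set Vd' := V.filter (fun v => v i = some !δ) with hVd'
  set Vs := V.filter (fun v => v i = none) with hVs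
  have h2 : V.filter (fun v => ¬ v i = some δ) = Vd' ∪ Vs := by
    rw [hVd', hVs, ← Finset.filter_or]
    apply Finset.filter_congr
    intro v _
    rcases h : v i with _ | b
    · simp [h]
    · cases b <;> cases δ <;> simp [h]
  have hdisj : Disjoint Vd' Vs := by
    rw [Finset.disjoint_left]
    intro v hv hv'
    simp only [hVd', hVs, Finset.mem_filter] at hv hv'
    rw [hv.2] at hv'
    exact absurd hv'.2 (by simp)
  have hsplit : codeVol V = codeVol Vd + codeVol Vd' + codeVol Vs := by
    have h1 : codeVol V = codeVol Vd + codeVol (V.filter (fun v => ¬ v i = some δ)) := by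
      rw [codeVol, ← Finset.sum_filter_add_sum_filter_not V (fun v => v i = some δ)]
      rfl
    have h3 : codeVol (Vd' ∪ Vs) = codeVol Vd' + codeVol Vs := by
      simp only [codeVol]
      exact Finset.sum_union hdisj
    rw [h1, h2, h3, Nat.add_assoc]
  have hinj : ∀ u ∈ Vd, ∀ v ∈ Vd, f u = f v → u = v := by
    intro u hu v hv h
    simp only [hVd, Finset.mem_filter] at hu hv
    funext j
    by_cases hj : j = i
    · subst hj; rw [hu.2, hv.2]
    · have := congrFun h j
      simpa [hf, Function.update_of_ne hj] using this
  have himg : codeVol (Vd.image f) = 2 * codeVol Vd := by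
    rw [codeVol, Finset.sum_image hinj, codeVol, Finset.mul_sum]
    refine Finset.sum_congr rfl fun v hv => ?_
    simp only [hVd, Finset.mem_filter] at hv
    have hi : i ∈ propSet v := by simp [propSet, hv.2]
    have hc1 : 1 ≤ (propSet v).card := Finset.card_pos.2 ⟨i, hi⟩
    have hcn : (propSet v).card ≤ n := by
      have := Finset.card_filter_le (Finset.univ : Finset (Fin n)) (fun j => v j ≠ none)
      simpa [propSet, Finset.card_univ] using this
    rw [hf]
    simp only [propSet_update_none, Finset.card_erase_of_mem hi]
    rw [show n - ((propSet v).card - 1) = (n - (propSet v).card) + 1 by omega]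
    ring
  have hdisj2 : Disjoint (Vd.image f) Vs := by
    rw [Finset.disjoint_left]
    rintro w hw hws
    simp only [Finset.mem_image] at hw
    obtain ⟨v, hv, rfl⟩ := hw
    simp only [hVd, Finset.mem_filter] at hv
    simp only [hVs, Finset.mem_filter] at hws
    have hne : v ≠ f v := by
      intro h
      have := congrFun h i
      rw [hv.2] at this
      simp [hf] at this
    obtain ⟨j, b, hb1, hb2⟩ := hcode v hv.1 (f v) hws.1 hne
    by_cases hj : j = i
    · subst hj
      simp [hf] at hb2
    · have hb2' : v j = some !b := by
        simpa [hf, Function.update_of_ne hj] using hb2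
      rw [hb1] at hb2'
      simp at hb2'
  have hfin : codeVol (Vd.image f ∪ Vs) = codeVol (Vd.image f) + codeVol Vs := by
    simp only [codeVol]
    exact Finset.sum_union hdisj2
  rw [hsplit, hfin, himg]
  omega
end

section
/- If V ⊆ A^n is a code, then the n-dimensional Lebesgue measure of the union of the box realizations equals the volume of the code: μ(⋃_{v ∈ V} breve v) = Σ_{v ∈ V} 2^(n − |prop(v)|). -/
/-- The interval of `[0,2]` associated with a letter: `[0,1]` for the letter
`0`, `[1,2]` for the letter `1`, `[0,2]` for `*`. -/
def letterBox : Letter → Set ℝ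
  | some false => Set.Icc 0 1
  | some true => Set.Icc 1 2
  | none => Set.Icc 0 2

/-- The realization of a word `v` as a box in `ℝ^n`. -/
def breve {n : ℕ} (v : Word n) : Set (Fin n → ℝ) :=
  Set.univ.pi (fun i => letterBox (v i))


open MeasureTheory in
lemma letterBox_measurable (l : Letter) : MeasurableSet (letterBox l) := by
  rcases l with _ | b
  · exact measurableSet_Icc
  · cases b <;> exact measurableSet_Icc

open MeasureTheory in
lemma volume_letterBox (l : Letter) :
    volume (letterBox l) = if l = none then 2 else 1 := by
  rcases l with _ | b
  · norm_num [letterBox, Real.volume_Icc]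
  · cases b <;> simp [letterBox, Real.volume_Icc] <;> norm_num

open MeasureTheory in
lemma volume_breve {n : ℕ} (v : Word n) :
    volume (breve v) = (2 : ENNReal) ^ (n - (propSet v).card) := by
  rw [breve, volume_pi_pi]
  have h : ∀ i, volume (letterBox (v i)) = if v i = none then 2 else 1 :=
    fun i => volume_letterBox (v i)
  simp_rw [h]
  rw [Finset.prod_ite, Finset.prod_const, Finset.prod_const, one_pow, mul_one]
  congr 1
  have hc := Finset.card_filter_add_card_filter_not
    (s := (Finset.univ : Finset (Fin n))) (p := fun i => v i = none)
  simp only [Finset.card_univ, Fintype.card_fin] at hc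
  have : (propSet v).card = (Finset.univ.filter (fun i => ¬ v i = none)).card := rfl
  omega

open MeasureTheory in
/-- The Lebesgue measure of the union of the box realizations of a code equals
the total volume `Σ_{v ∈ V} 2^(n - |prop v|)` of the code. -/
theorem code_measure_union_eq_vol {n : ℕ} (V : Finset (Word n))
    (hcode : IsCode V) :
    volume (⋃ v ∈ V, breve v) =
      ∑ v ∈ V, (2 : ENNReal) ^ (n - (propSet v).card) := by
  rw [measure_biUnion_finset₀ ?_ ?_]
  · exact Finset.sum_congr rfl fun v _ => volume_breve v
  · intro u hu v hv huv
    obtain ⟨i, b, hub, hvb⟩ := hcode u hu v hv huv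
    have h0 : volume {x : Fin n → ℝ | x i = 1} = 0 := by
      rw [volume_pi]; exact Measure.pi_hyperplane _ i 1
    refine measure_mono_null ?_ h0
    intro x ⟨hxu, hxv⟩
    have h1 : x i ∈ letterBox (u i) := hxu i (Set.mem_univ i)
    have h2 : x i ∈ letterBox (v i) := hxv i (Set.mem_univ i)
    rw [hub] at h1; rw [hvb] at h2
    show x i = 1
    cases b <;> simp [letterBox] at h1 h2 <;> linarith
  · intro v _
    exact (MeasurableSet.univ_pi fun i => letterBox_measurable (v i)).nullMeasurableSet
end
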